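/- arXiv:1302.2792 — 4 statements merged into one kernel-verified Lean document; each statement's English description precedes it below -/
import Mathlib

section
/- Let h be an integer such that 56 divides h(h-1). Then there exist a sign ε ∈ {1, -1} and an integer n such that, as rational numbers, h(h-1)/112 + (2h-1)/32 = ε/32 + n. In other words, h(h-1)/112 + (2h-1)/32 ≡ ±1/32 (mod ℤ). -/
/-! Write `h (h - 1) = 56 k`. The class is then `(2 N - 1) / 32` with `N = 8 k + h`, and
`N ≡ h (h - 1) + h = h ^ 2 (mod 16)`. Since `8 ∣ h (h - 1)` forces `h ≡ 0, 1 (mod 8)`, we get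
`h ^ 2 ≡ 0, 1 (mod 16)`, so `2 N - 1 ≡ ±1 (mod 32)`. -/

theorem ZMod.sq_eq_zero_or_one_of_mul_sub_one_eq_eight_mul :
    ∀ a b : ZMod 16, b * (b - 1) = 8 * a → b ^ 2 = 0 ∨ b ^ 2 = 1 := by
  decide

theorem Int.sq_emod_sixteen_of_eight_dvd {h : ℤ} (hd : 8 ∣ h * (h - 1)) :
    h ^ 2 % 16 = 0 ∨ h ^ 2 % 16 = 1 := by
  obtain ⟨a, ha⟩ := hd
  have hz : (h : ZMod 16) * (h - 1) = 8 * a := by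
    exact_mod_cast congrArg (Int.cast (R := ZMod 16)) ha
  rcases ZMod.sq_eq_zero_or_one_of_mul_sub_one_eq_eight_mul a h hz with h0 | h1
  · exact .inl ((ZMod.intCast_eq_intCast_iff' (h ^ 2) 0 16).mp (by exact_mod_cast h0))
  · exact .inr ((ZMod.intCast_eq_intCast_iff' (h ^ 2) 1 16).mp (by exact_mod_cast h1))

theorem Int.exists_sign_of_emod_sixteen {N : ℤ} (hN : N % 16 = 0 ∨ N % 16 = 1) :
    ∃ ε : ℤ, (ε = 1 ∨ ε = -1) ∧ ∃ n : ℤ, ((2 * N - 1 : ℤ) : ℚ) / 32 = ε / 32 + n := by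
  refine ⟨2 * (N % 16) - 1, by omega, N / 16, ?_⟩
  have hsplit : 2 * N - 1 = 2 * (N % 16) - 1 + 32 * (N / 16) := by omega
  rw [hsplit]
  push_cast
  ring

theorem stmt_0 (h : ℤ) (hdvd : (56 : ℤ) ∣ h * (h - 1)) :
    ∃ ε : ℤ, (ε = 1 ∨ ε = -1) ∧ ∃ n : ℤ,
      ((h : ℚ) * (h - 1)) / 112 + (2 * h - 1) / 32 = ε / 32 + n := by
  obtain ⟨k, hk⟩ := hdvd
  have hN : 8 * k + h ≡ h ^ 2 [ZMOD 16] := Int.modEq_iff_dvd.mpr ⟨3 * k, by linear_combination hk⟩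
  have hsq := Int.sq_emod_sixteen_of_eight_dvd (h := h) ⟨7 * k, by linear_combination hk⟩
  have hq : ((h : ℚ) * (h - 1)) / 112 + (2 * h - 1) / 32 =
      ((2 * (8 * k + h) - 1 : ℤ) : ℚ) / 32 := by
    have hkq : (h : ℚ) * (h - 1) = 56 * k := by exact_mod_cast hk
    rw [hkq]
    push_cast
    ring
  rw [hq]
  exact Int.exists_sign_of_emod_sixteen (hN.eq ▸ hsq)
end

section
/- Let h be an integer such that 56 divides h(h-1). Then there exist a sign ε ∈ {1, -1} and an integer n such that, as rational numbers, h(h-1)/112 - (2h-1)/32 = ε/32 + n. In other words, h(h-1)/112 - (2h-1)/32 ≡ ±1/32 (mod ℤ). -/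
lemma zmod_aux : ∀ a k : ZMod 16, a * (a - 1) = 8 * k →
    (8 * k - a = 0 ∨ 8 * k - a + 1 = 0) := by decide

theorem stmt_1 (h : ℤ) (hdvd : (56 : ℤ) ∣ h * (h - 1)) :
    ∃ ε : ℤ, (ε = 1 ∨ ε = -1) ∧ ∃ n : ℤ,
      ((h : ℚ) * (h - 1)) / 112 - (2 * h - 1) / 32 = ε / 32 + n := by
  obtain ⟨k, hk⟩ := hdvd
  have hz : ((h : ZMod 16) * (h - 1) = 8 * k) := by
    have := congrArg (Int.cast : ℤ → ZMod 16) hk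
    push_cast at this
    rw [this, show (56 : ZMod 16) = 8 from by decide]
  have key : ((h : ℚ) * (h - 1)) / 112 - (2 * h - 1) / 32
      = ((16 * k - 2 * h + 1 : ℤ) : ℚ) / 32 := by
    rw [show ((h : ℚ) * (h - 1)) = 56 * (k : ℚ) from by exact_mod_cast hk]
    push_cast; ring
  rcases zmod_aux h k hz with hc | hc
  · have hd : (16 : ℤ) ∣ 8 * k - h := by
      have : ((8 * k - h : ℤ) : ZMod 16) = 0 := by push_cast; exact hc
      exact (ZMod.intCast_zmod_eq_zero_iff_dvd _ 16).mp this
    obtain ⟨m, hm⟩ := hd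
    refine ⟨1, Or.inl rfl, m, ?_⟩
    rw [key, show (16 * k - 2 * h + 1 : ℤ) = 32 * m + 1 by omega]
    push_cast; ring
  · have hd : (16 : ℤ) ∣ 8 * k - h + 1 := by
      have : ((8 * k - h + 1 : ℤ) : ZMod 16) = 0 := by push_cast; exact hc
      exact (ZMod.intCast_zmod_eq_zero_iff_dvd _ 16).mp this
    obtain ⟨m, hm⟩ := hd
    refine ⟨-1, Or.inr rfl, m, ?_⟩
    rw [key, show (16 * k - 2 * h + 1 : ℤ) = 32 * m + -1 by omega]
    push_cast; ring
end

section
/- Let h be an integer with h ≡ 0 or 8 modulo 56. Then h(h-1)/112 + (2h-1)/32 + 1/32 is an integer. Let h be an integer with h ≡ 1 or 49 modulo 56. Then h(h-1)/112 + (2h-1)/32 - 1/32 is an integer. -/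
theorem stmt_7 :
    (∀ h : ℤ, (h % 56 = 0 ∨ h % 56 = 8) →
      ∃ n : ℤ, ((h : ℚ) * (h - 1)) / 112 + (2 * h - 1) / 32 + 1 / 32 = n) ∧
    (∀ h : ℤ, (h % 56 = 1 ∨ h % 56 = 49) →
      ∃ n : ℤ, ((h : ℚ) * (h - 1)) / 112 + (2 * h - 1) / 32 - 1 / 32 = n) := by
  constructor
  · rintro h (hr | hr)
    · obtain ⟨k, rfl⟩ : ∃ k, h = 56 * k := ⟨h / 56, by omega⟩
      exact ⟨28 * k ^ 2 + 3 * k, by push_cast; ring⟩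
    · obtain ⟨k, rfl⟩ : ∃ k, h = 56 * k + 8 := ⟨h / 56, by omega⟩
      exact ⟨28 * k ^ 2 + 11 * k + 1, by push_cast; ring⟩
  · rintro h (hr | hr)
    · obtain ⟨k, rfl⟩ : ∃ k, h = 56 * k + 1 := ⟨h / 56, by omega⟩
      exact ⟨28 * k ^ 2 + 4 * k, by push_cast; ring⟩
    · obtain ⟨k, rfl⟩ : ∃ k, h = 56 * k + 49 := ⟨h / 56, by omega⟩
      exact ⟨28 * k ^ 2 + 52 * k + 24, by push_cast; ring⟩
end

section
/- Let h be an integer such that 56 divides h(h-1). Then for all signs s, ε ∈ {1, -1}, the rational number h(h-1)/112 + s·(2h-1)/32 - ε/32 - 1/2 is not an integer. -/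
theorem stmt_12 (h : ℤ) (hdvd : (56 : ℤ) ∣ h * (h - 1))
    (s ε : ℤ) (hs : s = 1 ∨ s = -1) (hε : ε = 1 ∨ ε = -1) :
    ¬ ∃ n : ℤ,
      ((h : ℚ) * (h - 1)) / 112 + (s : ℚ) * (2 * h - 1) / 32 - (ε : ℚ) / 32 - 1 / 2 = n := by
  rintro ⟨n, hn⟩
  obtain ⟨k, hk⟩ := hdvd
  have hkQ : ((h : ℚ) * (h - 1)) = 56 * (k : ℚ) := by exact_mod_cast hk
  have key : (16 * k + s * (2 * h - 1) - ε - 16 : ℤ) = 32 * n := by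
    have : ((16 * k + s * (2 * h - 1) - ε - 16 : ℤ) : ℚ) = ((32 * n : ℤ) : ℚ) := by
      push_cast
      linear_combination 32 * hn - (2 / 7 : ℚ) * hkQ
    exact_mod_cast this
  have h1 : (h : ZMod 32) * ((h : ZMod 32) - 1) = 56 * (k : ZMod 32) := by
    have := congrArg (fun z : ℤ => (z : ZMod 32)) hk
    push_cast at this
    exact this
  have h2 : 16 * (k : ZMod 32) + (s : ZMod 32) * (2 * (h : ZMod 32) - 1)
      - (ε : ZMod 32) - 16 = 0 := by
    have := congrArg (fun z : ℤ => (z : ZMod 32)) key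
    push_cast at this
    rw [this, show (32 : ZMod 32) = 0 from rfl, zero_mul]
  have main : ∀ H K S E : ZMod 32, (S = 1 ∨ S = -1) → (E = 1 ∨ E = -1) →
      H * (H - 1) = 56 * K → 16 * K + S * (2 * H - 1) - E - 16 ≠ 0 := by
    intro H K S E hS hE
    rcases hS with rfl | rfl <;> rcases hE with rfl | rfl <;> revert H K <;> decide
  have hS : (s : ZMod 32) = 1 ∨ (s : ZMod 32) = -1 := by
    rcases hs with rfl | rfl <;> simp
  have hE : (ε : ZMod 32) = 1 ∨ (ε : ZMod 32) = -1 := by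
    rcases hε with rfl | rfl <;> simp
  exact main _ _ _ _ hS hE h1 h2
end
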